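/- Let k ≥ 1 and let γ = k(3k−2); note (2k)² − ((k+1)² − 1) = k(3k−2). Let S₁, …, S_c be independent random variables, each uniformly distributed on the s-element subsets of a set of (2k)² elements (the shares of a 2k × 2k extended matrix), with 0 < s ≤ (2k)². Then the probability that |S₁ ∪ ⋯ ∪ S_c| ≥ γ equals 1 − Σ_{i=1}^{(2k)²−λ} (−1)^{i−1} · C(λ+i−1, λ) · C((2k)², λ+i) · (C((2k)²−λ−i, s)/C((2k)², s))^c, where λ = (k+1)² − 1 and C denotes the binomial coefficient with C(a, b) = 0 for b > a. -/

import Mathlib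

/-!
Inclusion–exclusion in Euler's form. If the samples together miss `W` of the `n` shares, then
`∑_{j < n - λ} (-1)^j C(λ+j, λ) C(W, λ+j+1)` is `1` when `W > λ` and `0` otherwise. Summing
`C(W, m)` over all sample profiles counts the pairs `(T, f)` with `|T| = m` and `T` avoided by
every sample of `f`, which is `C(n, m) C(n-m, s)^c`. Hence the number of profiles missing more
than `λ` shares is `∑_{j < n - λ} (-1)^j C(λ+j, λ) C(n, λ+j+1) C(n-λ-j-1, s)^c`.
-/

open Finset

lemma alternating_sum_range_choose_of_lt {r N : ℕ} (h : r < N) :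
    ∑ j ∈ range N, (-1 : ℤ) ^ j * r.choose j = if r = 0 then 1 else 0 := by
  rw [← Int.alternating_sum_range_choose]
  refine (sum_subset (range_subset_range.2 h) fun j _ hj => ?_).symm
  rw [Nat.choose_eq_zero_of_lt (by simpa using hj), Nat.cast_zero, mul_zero]

lemma choose_add_mul_choose (n l j : ℕ) :
    (l + j).choose l * n.choose (l + j) = n.choose l * (n - l).choose j := by
  rw [mul_comm, Nat.choose_mul (l.le_add_right j), Nat.add_sub_cancel_left]

lemma alternating_sum_range_choose_add_mul_choose (l N W : ℕ) (hW : W ≤ l + N) :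
    ∑ j ∈ range N, (-1 : ℤ) ^ j * (l + j).choose l * W.choose (l + j + 1) =
      if l < W then 1 else 0 := by
  induction W with
  | zero => simp
  | succ W ih =>
    have pascal (j : ℕ) : (-1 : ℤ) ^ j * (l + j).choose l * (W + 1).choose (l + j + 1) =
        (-1) ^ j * (l + j).choose l * W.choose (l + j + 1) +
          W.choose l * ((-1) ^ j * (W - l).choose j) := by
      have h := congrArg (Nat.cast (R := ℤ)) (choose_add_mul_choose W l j)
      push_cast at h
      rw [Nat.choose_succ_succ', Nat.cast_add]
      linear_combination (-1 : ℤ) ^ j * h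
    simp only [pascal, sum_add_distrib, ← mul_sum, ih (by omega)]
    rcases lt_or_ge W l with hlt | hle
    · simp [Nat.choose_eq_zero_of_lt hlt, hlt.not_gt, show ¬ l < W + 1 by omega]
    · rw [alternating_sum_range_choose_of_lt (show W - l < N by omega)]
      rcases hle.eq_or_lt with rfl | hlt
      · simp
      · simp [hlt, show l < W + 1 by omega, show W - l ≠ 0 by omega]

section Sampling

variable {ι α : Type*} [Fintype ι] [DecidableEq ι] [Fintype α]

lemma filter_forall_card_eq_eq_piFinset (s : ℕ) :
    ({f : ι → Finset α | ∀ i, #(f i) = s} : Finset _) =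
      Fintype.piFinset fun _ => powersetCard s univ := by
  ext f
  simp [mem_powersetCard]

variable [DecidableEq α]

lemma filter_disjoint_biUnion_piFinset_powersetCard (s : ℕ) (T : Finset α) :
    {f ∈ Fintype.piFinset fun _ : ι => powersetCard s (univ : Finset α) |
        Disjoint T ((univ : Finset ι).biUnion f)} =
      Fintype.piFinset fun _ : ι => powersetCard s Tᶜ := by
  ext f
  simp [mem_powersetCard, disjoint_biUnion_right, subset_compl_iff_disjoint_left, forall_and,
    and_comm]

lemma sum_choose_card_compl_biUnion (s m : ℕ) :
    ∑ f ∈ Fintype.piFinset (fun _ : ι => powersetCard s (univ : Finset α)),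
        (#((univ : Finset ι).biUnion f)ᶜ).choose m =
      (Fintype.card α).choose m * (Fintype.card α - m).choose s ^ Fintype.card ι := by
  have above (f : ι → Finset α) : (powersetCard m univ).bipartiteAbove
      (fun f T => Disjoint T ((univ : Finset ι).biUnion f)) f =
        powersetCard m ((univ : Finset ι).biUnion f)ᶜ := by
    ext T
    simp [mem_powersetCard, subset_compl_iff_disjoint_right, and_comm]
  simp_rw [← card_powersetCard, ← above, sum_card_bipartiteAbove_eq_sum_card_bipartiteBelow]
  calc _ = ∑ T ∈ powersetCard m (univ : Finset α),
        (Fintype.card α - m).choose s ^ Fintype.card ι := by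
        refine sum_congr rfl fun T hT => ?_
        rw [bipartiteBelow, filter_disjoint_biUnion_piFinset_powersetCard,
          Fintype.card_piFinset, prod_const, card_powersetCard, card_compl,
          (mem_powersetCard.1 hT).2, card_univ]
    _ = _ := by rw [sum_const, card_powersetCard, card_univ, smul_eq_mul]

lemma card_filter_lt_card_compl_biUnion (l s : ℕ) :
    (#{f ∈ Fintype.piFinset fun _ : ι => powersetCard s (univ : Finset α) |
        l < #((univ : Finset ι).biUnion f)ᶜ} : ℤ) =
      ∑ j ∈ range (Fintype.card α - l), (-1) ^ j * ((l + j).choose l : ℤ) *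
        ((Fintype.card α).choose (l + j + 1) *
          (Fintype.card α - (l + j + 1)).choose s ^ Fintype.card ι) := by
  calc _ = ∑ f ∈ Fintype.piFinset (fun _ : ι => powersetCard s (univ : Finset α)),
        ∑ j ∈ range (Fintype.card α - l), (-1) ^ j * ((l + j).choose l : ℤ) *
          (#((univ : Finset ι).biUnion f)ᶜ).choose (l + j + 1) := by
        rw [natCast_card_filter]
        refine sum_congr rfl fun f _ => ?_
        have := card_le_univ ((univ : Finset ι).biUnion f)ᶜ
        rw [alternating_sum_range_choose_add_mul_choose _ _ _ (by omega)]
    _ = _ := by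
        rw [sum_comm]
        refine sum_congr rfl fun j _ => ?_
        rw [← mul_sum, ← Nat.cast_sum, sum_choose_card_compl_biUnion]
        push_cast
        ring

theorem card_filter_sub_le_card_biUnion_div_card {n : ℕ} (l s : ℕ)
    (hcard : Fintype.card α = n) (hsn : s ≤ n) :
    ((#{f : ι → Finset α |
        (∀ i, #(f i) = s) ∧ n - l ≤ #((univ : Finset ι).biUnion f)} : ℝ) /
      #{f : ι → Finset α | ∀ i, #(f i) = s}) =
      1 - ∑ i ∈ Icc 1 (n - l), (-1 : ℝ) ^ (i - 1) * ((l + i - 1).choose l : ℝ) *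
        (n.choose (l + i) : ℝ) *
          (((n - l - i).choose s : ℝ) / (n.choose s : ℝ)) ^ Fintype.card ι := by
  subst hcard
  set P := Fintype.piFinset fun _ : ι => powersetCard s (univ : Finset α)
  have hP : (#P : ℝ) = (Fintype.card α).choose s ^ Fintype.card ι := by
    simp [P, Fintype.card_piFinset]
  have hP0 : (#P : ℝ) ≠ 0 := by
    rw [hP]
    exact pow_ne_zero _ (mod_cast (Nat.choose_pos hsn).ne')
  have hcompl : {f ∈ P | ¬ l < #((univ : Finset ι).biUnion f)ᶜ} =
      {f ∈ P | Fintype.card α - l ≤ #((univ : Finset ι).biUnion f)} := by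
    refine filter_congr fun f _ => ?_
    have := card_le_univ ((univ : Finset ι).biUnion f)
    rw [card_compl]
    omega
  have hsplit : (#{f ∈ P | Fintype.card α - l ≤ #((univ : Finset ι).biUnion f)} : ℝ) =
      #P - #{f ∈ P | l < #((univ : Finset ι).biUnion f)ᶜ} := by
    rw [← hcompl,
      ← card_filter_add_card_filter_not (s := P)
        (fun f => l < #((univ : Finset ι).biUnion f)ᶜ)]
    push_cast
    ring
  have hmissed :=
    congrArg (Int.cast (R := ℝ)) (card_filter_lt_card_compl_biUnion (ι := ι) (α := α) l s)
  push_cast at hmissed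
  rw [← filter_filter, filter_forall_card_eq_eq_piFinset, hsplit, hmissed, sub_div,
    div_self hP0, sum_div, ← Ico_add_one_right_eq_Icc, sum_Ico_eq_sum_range, Nat.add_sub_cancel]
  congr 1
  refine sum_congr rfl fun j _ => ?_
  rw [hP, add_comm 1 j, Nat.add_sub_cancel, Nat.sub_sub, ← add_assoc, Nat.add_sub_cancel,
    div_pow]
  field_simp

end Sampling

theorem stmt8_general {α : Type*} [Fintype α] [DecidableEq α]
    (k s c : ℕ) (hcard : Fintype.card α = (2 * k) ^ 2)
    (hsn : s ≤ (2 * k) ^ 2) :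
    (2 * k) ^ 2 - ((k + 1) ^ 2 - 1) = k * (3 * k - 2) ∧
    ((((Finset.univ : Finset (Fin c → Finset α)).filter
        (fun f => (∀ i, (f i).card = s) ∧
          k * (3 * k - 2) ≤ ((Finset.univ : Finset (Fin c)).biUnion f).card)).card : ℝ) /
      (((Finset.univ : Finset (Fin c → Finset α)).filter
        (fun f => ∀ i, (f i).card = s)).card : ℝ)) =
    1 - ∑ i ∈ Finset.Icc 1 ((2 * k) ^ 2 - ((k + 1) ^ 2 - 1)),
      (-1 : ℝ) ^ (i - 1) * ((((k + 1) ^ 2 - 1) + i - 1).choose ((k + 1) ^ 2 - 1) : ℝ) *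
        (((2 * k) ^ 2).choose (((k + 1) ^ 2 - 1) + i) : ℝ) *
        ((((2 * k) ^ 2 - ((k + 1) ^ 2 - 1) - i).choose s : ℝ) /
          (((2 * k) ^ 2).choose s : ℝ)) ^ c := by
  have hγ : (2 * k) ^ 2 - ((k + 1) ^ 2 - 1) = k * (3 * k - 2) := by
    rcases Nat.eq_zero_or_pos k with rfl | hk
    · rfl
    have h1 : 1 ≤ (k + 1) ^ 2 := Nat.one_le_pow _ _ k.succ_pos
    have h2 : (k + 1) ^ 2 - 1 ≤ (2 * k) ^ 2 := by rw [Nat.sub_le_iff_le_add]; nlinarith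
    zify [h1, h2, show 2 ≤ 3 * k by omega]
    ring
  refine ⟨hγ, ?_⟩
  have h := card_filter_sub_le_card_biUnion_div_card (ι := Fin c) ((k + 1) ^ 2 - 1) s hcard hsn
  rw [Fintype.card_fin, hγ] at h
  -- the statement decides `∀ i : Fin c` by `Nat.decidableForallFin`, not the generic instance
  convert h

/-- Corollary of Euler's formula for the `2k × 2k` extended matrix: with
`λ = (k+1)² − 1` and `γ = k(3k−2) = (2k)² − λ`, if `c` light clients each
independently sample a uniformly random `s`-element subset of the `(2k)²`
shares, the probability that they collectively obtain at least `γ` distinct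
shares equals
`1 − Σ_{i=1}^{(2k)²−λ} (−1)^{i−1} C(λ+i−1, λ) C((2k)², λ+i) (C((2k)²−λ−i, s)/C((2k)², s))^c`. -/
theorem stmt8 {α : Type*} [Fintype α] [DecidableEq α]
    (k s c : ℕ) (hk : 1 ≤ k) (hcard : Fintype.card α = (2 * k) ^ 2)
    (hs : 0 < s) (hsn : s ≤ (2 * k) ^ 2) :
    (2 * k) ^ 2 - ((k + 1) ^ 2 - 1) = k * (3 * k - 2) ∧
    ((((Finset.univ : Finset (Fin c → Finset α)).filter
        (fun f => (∀ i, (f i).card = s) ∧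
          k * (3 * k - 2) ≤ ((Finset.univ : Finset (Fin c)).biUnion f).card)).card : ℝ) /
      (((Finset.univ : Finset (Fin c → Finset α)).filter
        (fun f => ∀ i, (f i).card = s)).card : ℝ)) =
    1 - ∑ i ∈ Finset.Icc 1 ((2 * k) ^ 2 - ((k + 1) ^ 2 - 1)),
      (-1 : ℝ) ^ (i - 1) * ((((k + 1) ^ 2 - 1) + i - 1).choose ((k + 1) ^ 2 - 1) : ℝ) *
        (((2 * k) ^ 2).choose (((k + 1) ^ 2 - 1) + i) : ℝ) *
        ((((2 * k) ^ 2 - ((k + 1) ^ 2 - 1) - i).choose s : ℝ) /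
          (((2 * k) ^ 2).choose s : ℝ)) ^ c :=
  stmt8_general k s c hcard hsn
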